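/- Let I ⊆ ℝ be an open interval and let u : I → ℝ be three times continuously differentiable with u(x)² ≠ 1 for all x ∈ I and (1 − u(x)²)·u''(x) = u(x) on I. Define v(x) = (1/2)·x·u'(x). Then for all x ∈ I: −(1 − u(x)²)·v''(x) + ((1 + u(x)²)/(1 − u(x)²))·v(x) = −u(x). That is, v = (1/2)x·u' solves L₊v = −u, where L₊ = −(1 − u²)∂_x² + (1 + u²)/(1 − u²). -/

import Mathlib

open Filter Topology

/-!
Since `v = x u' / 2`, we have `v'' = u'' + (x/2) u'''`. Differentiating the stationary equation
gives `(1 - u²) u''' = u' (1 + 2 u u'')`, and `2 u u'' = 2 u² / (1 - u²)`, so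
`-(1 - u²) v'' = -u - (x/2) u' (1 + u²) / (1 - u²)`, which cancels the potential term.
-/

theorem deriv_deriv_eq_of_hasDerivAt {𝕜 F : Type*} [NontriviallyNormedField 𝕜]
    [NormedAddCommGroup F] [NormedSpace 𝕜 F] {s : Set 𝕜} (hs : IsOpen s) {f f' : 𝕜 → F}
    {x : 𝕜} {a : F} (hx : x ∈ s) (hf : ∀ y ∈ s, HasDerivAt f (f' y) y) (hf' : HasDerivAt f' a x) :
    deriv (deriv f) x = a := by
  have hderiv : deriv f =ᶠ[𝓝 x] f' :=
    eventually_of_mem (hs.mem_nhds hx) fun y hy => (hf y hy).deriv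
  rw [hderiv.deriv_eq, hf'.deriv]

theorem hasDerivAt_const_mul_self_mul {g : ℝ → ℝ} {g' x : ℝ} (c : ℝ)
    (hg : HasDerivAt g g' x) :
    HasDerivAt (fun y => c * y * g y) (c * g x + c * x * g') x := by
  simpa using ((hasDerivAt_id x).const_mul c).fun_mul hg

theorem one_sub_sq_mul_deriv_of_stationary {I : Set ℝ} (hI : IsOpen I) {u u' u'' : ℝ → ℝ}
    {x u''' : ℝ} (hx : x ∈ I) (hu : HasDerivAt u (u' x) x) (hu'' : HasDerivAt u'' u''' x)
    (heq : ∀ y ∈ I, (1 - u y ^ 2) * u'' y = u y) :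
    (1 - u x ^ 2) * u''' = u' x + 2 * u x * u' x * u'' x := by
  have hlhs : HasDerivAt (fun y => (1 - u y ^ 2) * u'' y)
      (-(2 * u x * u' x) * u'' x + (1 - u x ^ 2) * u''') x := by
    simpa using ((hu.fun_pow 2).const_sub 1).fun_mul hu''
  have hsame : (fun y => (1 - u y ^ 2) * u'' y) =ᶠ[𝓝 x] u :=
    eventually_of_mem (hI.mem_nhds hx) heq
  have hderiv := (hlhs.congr_of_eventuallyEq hsame.symm).unique hu
  linarith

theorem generalized_eigenvector_algebraic {x u u' u'' u''' : ℝ} (hne : u ^ 2 ≠ 1)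
    (heq : (1 - u ^ 2) * u'' = u) (hderiv : (1 - u ^ 2) * u''' = u' + 2 * u * u' * u'') :
    -(1 - u ^ 2) * (u'' + 1 / 2 * x * u''') + (1 + u ^ 2) / (1 - u ^ 2) * (1 / 2 * x * u') =
      -u := by
  have hden : 1 - u ^ 2 ≠ 0 := sub_ne_zero.mpr hne.symm
  field_simp
  linear_combination (-2 * (1 - u ^ 2) - 2 * x * u * u') * heq + (-x * (1 - u ^ 2)) * hderiv

theorem generalized_eigenvector_solves
    (I : Set ℝ) (hI : IsOpen I)
    (u u' u'' u''' : ℝ → ℝ)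
    (hu : ∀ x ∈ I, HasDerivAt u (u' x) x)
    (hu' : ∀ x ∈ I, HasDerivAt u' (u'' x) x)
    (hu'' : ∀ x ∈ I, HasDerivAt u'' (u''' x) x)
    (hne : ∀ x ∈ I, u x ^ 2 ≠ 1)
    (heq : ∀ x ∈ I, (1 - u x ^ 2) * u'' x = u x) :
    ∀ x ∈ I,
      -(1 - u x ^ 2) * deriv (deriv (fun y : ℝ => (1 / 2) * y * u' y)) x +
          ((1 + u x ^ 2) / (1 - u x ^ 2)) * ((1 / 2) * x * u' x) = -u x := by
  intro x hx
  have hv'' : deriv (deriv (fun y : ℝ => (1 / 2) * y * u' y)) x = u'' x + 1 / 2 * x * u''' x := by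
    refine deriv_deriv_eq_of_hasDerivAt hI hx
      (fun y hy => hasDerivAt_const_mul_self_mul _ (hu' y hy)) ?_
    refine (((hu' x hx).const_mul (1 / 2)).fun_add
      (hasDerivAt_const_mul_self_mul (1 / 2) (hu'' x hx))).congr_deriv ?_
    ring
  rw [hv'']
  exact generalized_eigenvector_algebraic (hne x hx) (heq x hx)
    (one_sub_sq_mul_deriv_of_stationary hI hx (hu x hx) (hu'' x hx) heq)
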